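/- Let s be a buying Nash equilibrium of the sum classic network creation game with n players and parameter α > 0, with connected graph G = G[s] of diameter d. Then for any two nodes v_1, v_2 ∈ V(G): Σ_{i=1}^{d} |M_i(v_1,v_2)| ≥ n·d − 2α. -/

import Mathlib

open SimpleGraph Finset
open scoped Classical

/-! ### The sum classic network creation game -/

/-- The communication network `G[s]` of a strategy profile `s`:
an undirected graph on the players with an edge between `u` and `v`
iff `v ∈ s u` or `u ∈ s v`. -/
def commGraph (n : ℕ) (s : Fin n → Finset (Fin n)) : SimpleGraph (Fin n) :=
  SimpleGraph.fromRel (fun u v => v ∈ s u)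

/-- A strategy profile is valid if no player buys a link to itself,
i.e. `s u ⊆ V ∖ {u}`. -/
def ValidProfile (n : ℕ) (s : Fin n → Finset (Fin n)) : Prop := ∀ u, u ∉ s u

/-- The (finite part of the) cost of player `u`:
`α·|s_u|` plus the sum of the distances from `u` to all other players. -/
noncomputable def gameCost (n : ℕ) (α : ℝ) (s : Fin n → Finset (Fin n)) (u : Fin n) : ℝ :=
  α * (s u).card + ∑ v, ((commGraph n s).dist u v : ℝ)

/-- The cost of player `u`, with value `⊤` when the communication network
is disconnected. -/
noncomputable def gameCostE (n : ℕ) (α : ℝ) (s : Fin n → Finset (Fin n)) (u : Fin n) : EReal :=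
  if (commGraph n s).Connected then ((gameCost n α s u : ℝ) : EReal) else ⊤

/-- Nash equilibrium of the sum classic network creation game: the communication
network is connected and no unilateral deviation strictly decreases the deviator's
cost (a deviation yielding a disconnected network has cost `+∞`, hence is never
an improvement and can be ignored). -/
def IsNE (n : ℕ) (α : ℝ) (s : Fin n → Finset (Fin n)) : Prop :=
  ValidProfile n s ∧ (commGraph n s).Connected ∧
    ∀ (u : Fin n) (t : Finset (Fin n)), u ∉ t →
      (commGraph n (Function.update s u t)).Connected →
      gameCost n α s u ≤ gameCost n α (Function.update s u t) u

/-- Buying Nash equilibrium: no player can strictly decrease its cost by only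
buying additional links (the deviated network is automatically connected). -/
def IsBuyingNE (n : ℕ) (α : ℝ) (s : Fin n → Finset (Fin n)) : Prop :=
  ValidProfile n s ∧ (commGraph n s).Connected ∧
    ∀ (u : Fin n) (t : Finset (Fin n)), u ∉ t → s u ⊆ t →
      gameCost n α s u ≤ gameCost n α (Function.update s u t) u

/-! ### Biconnected components -/

/-- A graph is biconnected if it is connected and removing any single vertex
keeps it connected (no cut vertex). -/
def Biconnected {V : Type*} (G : SimpleGraph V) : Prop :=
  G.Connected ∧ ∀ v : V, (G.induce {w | w ≠ v}).Connected

/-- `S` is the vertex set of a biconnected component of `G`: it induces a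
biconnected subgraph and is maximal with this property. -/
def IsBiconnectedComponent {V : Type*} (G : SimpleGraph V) (S : Set V) : Prop :=
  Biconnected (G.induce S) ∧ ∀ T : Set V, S ⊆ T → Biconnected (G.induce T) → T = S

/-- `deg_H^+(v)`: the number of links of the subgraph induced by `S` that are
bought by `v`. -/
noncomputable def degHplus (n : ℕ) (s : Fin n → Finset (Fin n)) (S : Set (Fin n))
    (v : Fin n) : ℕ :=
  ((↑(s v) : Set (Fin n)) ∩ S).ncard

/-! ### A sets -/

/-- `z` belongs to the `A` set `A^u_{e_1,…,e_k}(v)` where the bought edges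
`e_i = v vᵢ` have endpoints `vs`: every shortest path in `G` from `z` to `u`
passes through `v`, and the predecessor of `v` on any such path lies in `vs`. -/
def InAset {V : Type*} (G : SimpleGraph V) (u v : V) (vs : Set V) (z : V) : Prop :=
  ∀ p : G.Walk z u, p.length = G.dist z u →
    ∃ i, 0 < i ∧ i ≤ p.length ∧ p.getVert i = v ∧ p.getVert (i - 1) ∈ vs

/-- `z` belongs to the set `A^{j,u}_{e_1,…,e_k}(v)`: it belongs to
`A^u_{e_1,…,e_k}(v)` and admits a shortest path to `u` through `v` whose
predecessor of `v` is `vj`. -/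
def InAjset {V : Type*} (G : SimpleGraph V) (u v vj : V) (vs : Set V) (z : V) : Prop :=
  InAset G u v vs z ∧ ∃ p : G.Walk z u, p.length = G.dist z u ∧
    ∃ i, 0 < i ∧ i ≤ p.length ∧ p.getVert i = v ∧ p.getVert (i - 1) = vj

/-! ### Auxiliary graphs -/

/-- The `k`-th power of a graph: distinct `u`, `v` are adjacent iff their
distance in `G` is at most `k`. -/
def powerGraph {V : Type*} (G : SimpleGraph V) (k : ℕ) : SimpleGraph V where
  Adj u v := u ≠ v ∧ G.dist u v ≤ k
  symm := ⟨fun u v h => ⟨h.1.symm, by rw [SimpleGraph.dist_comm]; exact h.2⟩⟩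
  loopless := ⟨fun u h => h.1 rfl⟩

/-- A graph on `n` vertices is `ε`-distance-almost-uniform iff there is a
distance index `r` such that every vertex has at least `n(1−ε)` vertices at
distance exactly `r` or at distance exactly `r+1`. -/
def DistanceAlmostUniform {V : Type*} (G : SimpleGraph V) (n : ℕ) (ε : ℝ) : Prop :=
  ∃ r : ℕ, ∀ u : V, (n : ℝ) * (1 - ε) ≤
    max ({z | G.dist u z = r}.ncard : ℝ) ({z | G.dist u z = r + 1}.ncard : ℝ)

/-- The crossing graph `Z` of a family of vertex sets `A i`: `i ≠ j` are
adjacent iff some edge of `G` joins `A i` and `A j`. -/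
def crossGraph {V : Type*} {l : ℕ} (G : SimpleGraph V) (A : Fin l → Set V) :
    SimpleGraph (Fin l) :=
  SimpleGraph.fromRel (fun i j => ∃ x y, G.Adj x y ∧ x ∈ A i ∧ y ∈ A j)

/-- The maximum diameter of a connected component of `Z`. -/
noncomputable def maxCompDiam {V : Type*} (Z : SimpleGraph V) : ℕ :=
  sSup {d | ∃ i j, Z.Reachable i j ∧ Z.dist i j = d}

/-!
Buying the single edge `v₁v₂` costs `α`, and it brings `v₁` closer to every `z` with
`d(z,v₁) > d(z,v₂) + 1` by at least `d(z,v₁) - d(z,v₂) - 1`; in a buying equilibrium the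
total gain is at most `α`. Doing the same from `v₂` shows that
`Σ_z (|d(z,v₁) - d(z,v₂)| - 1)⁺ ≤ 2α`. Exchanging the order of summation, `Σ_{i=1}^d |M_i|`
counts every `z` at least `d - (|d(z,v₁) - d(z,v₂)| - 1)⁺` times, whence the bound.
-/

namespace SimpleGraph

variable {V : Type*} {G G' : SimpleGraph V} {a b z : V}

lemma dist_le_dist_add_one_of_le_of_adj (hle : G ≤ G') (hab : G'.Adj a b)
    (hbz : G.Reachable b z) : G'.dist a z ≤ G.dist b z + 1 := by
  obtain ⟨p, hp⟩ := hbz.exists_walk_length_eq_dist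
  simpa [hp] using dist_le (.cons hab (p.map (.ofLE hle)))

end SimpleGraph

lemma commGraph_mono {n : ℕ} {s s' : Fin n → Finset (Fin n)} (h : ∀ w, s w ⊆ s' w) :
    commGraph n s ≤ commGraph n s' := by
  intro u v
  simp only [commGraph, fromRel_adj]
  exact fun ⟨hne, huv⟩ => ⟨hne, huv.imp (fun h' => h u h') (fun h' => h v h')⟩

namespace IsBuyingNE

variable {n : ℕ} {α : ℝ} {s : Fin n → Finset (Fin n)}

lemma sum_dist_le_add_of_buy (hα : 0 ≤ α) (hs : IsBuyingNE n α s) {a b : Fin n}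
    (hab : a ≠ b) :
    ∑ z, ((commGraph n s).dist a z : ℝ) ≤
      ∑ z, ((commGraph n (Function.update s a (insert b (s a)))).dist a z : ℝ) + α := by
  have hcost := hs.2.2 a (insert b (s a)) (by simp [hab, hs.1 a]) (subset_insert _ _)
  have hcard : ((insert b (s a)).card : ℝ) ≤ (s a).card + 1 := by
    exact_mod_cast card_insert_le b (s a)
  simp only [gameCost, Function.update_self] at hcost
  linarith [mul_le_mul_of_nonneg_left hcard hα]

lemma sum_dist_sub_dist_sub_one_le (hα : 0 ≤ α) (hs : IsBuyingNE n α s) {a b : Fin n}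
    (hab : a ≠ b) :
    ∑ z, (((commGraph n s).dist z a - (commGraph n s).dist z b - 1 : ℕ) : ℝ) ≤ α := by
  set G := commGraph n s
  set G' := commGraph n (Function.update s a (insert b (s a)))
  have hle : G ≤ G' := commGraph_mono fun w => by
    rcases eq_or_ne w a with rfl | hw
    · simp
    · simp [Function.update_of_ne hw]
  have hadj : G'.Adj a b := by simp [G', commGraph, hab]
  have hpoint : ∀ z, G.dist z a - G.dist z b - 1 + G'.dist a z ≤ G.dist a z := by
    intro z
    have h₁ := (hs.2.1.preconnected a z).dist_anti hle
    have h₂ := dist_le_dist_add_one_of_le_of_adj hle hadj (hs.2.1.preconnected b z)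
    rw [dist_comm (u := z) (v := a), dist_comm (u := z) (v := b)]
    omega
  have hsum := sum_le_sum fun z (_ : z ∈ univ) => (Nat.cast_le (α := ℝ)).2 (hpoint z)
  push_cast at hsum
  rw [sum_add_distrib] at hsum
  linarith [hs.sum_dist_le_add_of_buy hα hab]

end IsBuyingNE

/-- In truncated subtraction, `(x - y - 1) + (y - x - 1)` is `(|x - y| - 1)⁺`. -/
lemma le_card_filter_abs_sub_le (d x y : ℕ) :
    d ≤ #{i ∈ Icc 1 d | |(x : ℤ) - y| ≤ ((i : ℕ) : ℤ)} + ((x - y - 1) + (y - x - 1)) := by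
  have : {i ∈ Icc 1 d | |(x : ℤ) - y| ≤ ((i : ℕ) : ℤ)} =
      Icc (max 1 ((x - y) + (y - x))) d := by
    ext i
    simp only [mem_filter, mem_Icc, abs_le]
    omega
  rw [this, Nat.card_Icc]
  omega

/-- For any buying NE graph `G` of diameter `d` and any two
nodes `v₁, v₂`, `Σ_{i=1}^{d} |M_i(v₁,v₂)| ≥ n·d − 2α`, where
`M_i(v₁,v₂) = {z : |d_G(z,v₁) − d_G(z,v₂)| ≤ i}`. -/
theorem stmt_14 (n : ℕ) (α : ℝ) (hα : 0 < α)
    (s : Fin n → Finset (Fin n)) (hs : IsBuyingNE n α s) (v₁ v₂ : Fin n) :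
    (n : ℝ) * (commGraph n s).diam - 2 * α ≤
      ∑ i ∈ Finset.Icc 1 ((commGraph n s).diam),
        ({z : Fin n |
            |((commGraph n s).dist z v₁ : ℤ) - ((commGraph n s).dist z v₂ : ℤ)| ≤
              (i : ℤ)}.ncard : ℝ) := by
  set G := commGraph n s
  set d := G.diam
  have hswap : ∑ i ∈ Icc 1 d, {z | |(G.dist z v₁ : ℤ) - G.dist z v₂| ≤ i}.ncard =
      ∑ z, #{i ∈ Icc 1 d | |(G.dist z v₁ : ℤ) - G.dist z v₂| ≤ ((i : ℕ) : ℤ)} := by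
    simp only [Set.ncard_eq_toFinset_card', Set.toFinset_ofPred]
    exact sum_card_bipartiteAbove_eq_sum_card_bipartiteBelow
      (fun (i : ℕ) z => |(G.dist z v₁ : ℤ) - G.dist z v₂| ≤ i)
  have hcount := sum_le_sum fun z (_ : z ∈ univ) =>
    le_card_filter_abs_sub_le d (G.dist z v₁) (G.dist z v₂)
  have hexcess :
      ∑ z, (((G.dist z v₁ - G.dist z v₂ - 1) + (G.dist z v₂ - G.dist z v₁ - 1) : ℕ) : ℝ) ≤
        2 * α := by
    rcases eq_or_ne v₁ v₂ with rfl | hne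
    · simp only [Nat.sub_self, Nat.zero_sub, add_zero, Nat.cast_zero, sum_const_zero]
      positivity
    · push_cast
      rw [sum_add_distrib]
      linarith [hs.sum_dist_sub_dist_sub_one_le hα.le hne,
        hs.sum_dist_sub_dist_sub_one_le hα.le hne.symm]
  rw [sum_add_distrib, ← hswap] at hcount
  simp only [sum_const, card_univ, Fintype.card_fin, smul_eq_mul] at hcount
  replace hcount := (Nat.cast_le (α := ℝ)).2 hcount
  push_cast at hcount hexcess ⊢
  linarith
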